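/- Let d and p be positive integers with p ≥ 2, let τ : {1, …, p} → {1, …, p} be a fixed-point-free map (τ(i) ≠ i for all i), and let α₁, …, α_p ∈ [0, d/2). Then the Lebesgue integral over (ℝ^d)^p of the function (x₁, …, x_p) ↦ ∏_{i=1}^p ⟨x_i⟩^{-(d+1)} · ∏_{i=1}^p |x_i − x_{τ(i)}|^{-α_i} (defined off the set where some x_i = x_{τ(i)}, which has measure zero) is finite. -/

import Mathlib

open MeasureTheory

/-- The "inhomogeneous norm" (Japanese bracket) `⟨y⟩ = (1 + |y|²)^{1/2}`. -/
noncomputable def jb {n : ℕ} (y : EuclideanSpace ℝ (Fin n)) : ℝ :=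
  (1 + ‖y‖ ^ 2) ^ ((1 : ℝ) / 2)

/-!
The variables are integrated out one at a time. Among the variables still present, pigeonhole on
`τ` gives an `x_j` that is the target of at most one remaining edge, so at most two factors
`|x_i - x_{τ i}|^{-α_i}` involve `x_j`, with total exponent `Γ < d`. Weighted AM-GM bounds their
product by a convex combination of terms `|x_j - y|^{-Γ}`, and `∫ ⟨t⟩^{-(d+1)} |t - y|^{-Γ} dt` is
bounded uniformly in `y` by splitting at `|t - y| = 1`.
-/

open Finset Metric Function Module
open scoped ENNReal

lemma one_le_jb {n : ℕ} (y : EuclideanSpace ℝ (Fin n)) : 1 ≤ jb y :=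
  Real.one_le_rpow (le_add_of_nonneg_right (by positivity)) (by norm_num)

lemma lintegral_jb_rpow_neg_lt_top {n : ℕ} {r : ℝ} (hr : n < r) :
    ∫⁻ y : EuclideanSpace ℝ (Fin n), ENNReal.ofReal (jb y ^ (-r)) < ⊤ := by
  have hjb : ∀ y : EuclideanSpace ℝ (Fin n), jb y ^ (-r) = (1 + ‖y‖ ^ 2) ^ (-r / 2) :=
    fun y => by
      rw [jb, ← Real.rpow_mul (by positivity)]
      ring_nf
  simp_rw [hjb]
  exact (integrable_rpow_neg_one_add_norm_sq
    (by rwa [finrank_euclideanSpace_fin])).lintegral_lt_top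

lemma Real.prod_rpow_neg_le_sum_mul_rpow_neg {ι : Type*} {s : Finset ι} {a β : ι → ℝ}
    (ha : ∀ e ∈ s, 0 ≤ a e) (hβ : ∀ e ∈ s, 0 ≤ β e) (hpos : 0 < ∑ e ∈ s, β e) :
    ∏ e ∈ s, a e ^ (-β e) ≤ ∑ e ∈ s, β e / (∑ e ∈ s, β e) * a e ^ (-∑ e ∈ s, β e) := by
  set Γ := ∑ e ∈ s, β e
  have hpow : ∀ e ∈ s, a e ^ (-β e) = (a e ^ (-Γ)) ^ (β e / Γ) := fun e he => by
    rw [← Real.rpow_mul (ha e he)]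
    congr 1
    field_simp
  rw [prod_congr rfl hpow]
  exact Real.geom_mean_le_arith_mean_weighted s _ _
    (fun e he => div_nonneg (hβ e he) hpos.le) (by rw [← sum_div, div_self hpos.ne'])
    (fun e he => Real.rpow_nonneg (ha e he) _)

section Kernel

variable {E : Type*} [NormedAddCommGroup E] [MeasurableSpace E] [BorelSpace E]
  {μ : Measure E}

lemma lintegral_ball_rpow_neg_norm_lt_top [NormedSpace ℝ E] [FiniteDimensional ℝ E]
    [μ.IsAddHaarMeasure] {Γ : ℝ} (h0 : 0 ≤ Γ) (hΓ : Γ < finrank ℝ E) :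
    ∫⁻ t in ball (0 : E) 1, ENNReal.ofReal (‖t‖ ^ (-Γ)) ∂μ < ⊤ := by
  have hdim : 0 < finrank ℝ E := by exact_mod_cast h0.trans_lt hΓ
  refine Integrable.lintegral_lt_top (integrableOn_ball_of_norm_le_rpow (C := 1) hdim hΓ
    (ae_of_all _ fun t => ?_) (measurable_norm.pow_const _).aestronglyMeasurable)
  rw [one_mul, Real.norm_of_nonneg (Real.rpow_nonneg (norm_nonneg t) _)]

variable [μ.IsAddRightInvariant] {w : E → ℝ≥0∞}

lemma lintegral_mul_rpow_neg_norm_sub_le (hw1 : w ≤ 1) {Γ : ℝ} (hΓ : 0 ≤ Γ) (y : E) :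
    ∫⁻ t, w t * ENNReal.ofReal (‖t - y‖ ^ (-Γ)) ∂μ ≤
      ∫⁻ t in ball (0 : E) 1, ENNReal.ofReal (‖t‖ ^ (-Γ)) ∂μ + ∫⁻ t, w t ∂μ := by
  set k : E → ℝ≥0∞ := (ball (0 : E) 1).indicator fun t => ENNReal.ofReal (‖t‖ ^ (-Γ))
    with hk_def
  have hk : Measurable k := Measurable.indicator (by fun_prop) measurableSet_ball
  have hpt : ∀ t, w t * ENNReal.ofReal (‖t - y‖ ^ (-Γ)) ≤ k (t - y) + w t := by
    intro t
    by_cases ht : t - y ∈ ball (0 : E) 1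
    · rw [hk_def, Set.indicator_of_mem ht]
      exact (mul_le_of_le_one_left' (hw1 t)).trans le_self_add
    · have : ‖t - y‖ ^ (-Γ) ≤ 1 := Real.rpow_le_one_of_one_le_of_nonpos
        (by simpa using ht) (neg_nonpos.mpr hΓ)
      exact (mul_le_of_le_one_right' (ENNReal.ofReal_le_one.mpr this)).trans le_add_self
  calc ∫⁻ t, w t * ENNReal.ofReal (‖t - y‖ ^ (-Γ)) ∂μ
      ≤ ∫⁻ t, k (t - y) + w t ∂μ := lintegral_mono hpt
    _ = ∫⁻ t, k (t - y) ∂μ + ∫⁻ t, w t ∂μ :=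
        lintegral_add_left (hk.comp (measurable_sub_const y)) _
    _ = _ := by rw [lintegral_sub_right_eq_self k y, lintegral_indicator measurableSet_ball]

lemma lintegral_mul_prod_rpow_neg_norm_sub_le (hw : Measurable w) (hw1 : w ≤ 1) {ι : Type*}
    {s : Finset ι} {β : ι → ℝ} (hβ : ∀ e ∈ s, 0 ≤ β e) (y : ι → E) :
    ∫⁻ t, w t * ∏ e ∈ s, ENNReal.ofReal (‖t - y e‖ ^ (-β e)) ∂μ ≤
      ∫⁻ t in ball (0 : E) 1, ENNReal.ofReal (‖t‖ ^ (-∑ e ∈ s, β e)) ∂μ + ∫⁻ t, w t ∂μ := by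
  set Γ := ∑ e ∈ s, β e
  set K := ∫⁻ t in ball (0 : E) 1, ENNReal.ofReal (‖t‖ ^ (-Γ)) ∂μ + ∫⁻ t, w t ∂μ
  rcases (sum_nonneg hβ).eq_or_lt with hΓ | hΓ
  · have hβ0 : ∀ e ∈ s, β e = 0 := (sum_eq_zero_iff_of_nonneg hβ).mp hΓ.symm
    have hprod : ∀ t, ∏ e ∈ s, ENNReal.ofReal (‖t - y e‖ ^ (-β e)) = 1 := fun t =>
      prod_eq_one fun e he => by simp [hβ0 e he]
    simp only [hprod, mul_one]
    exact le_add_self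
  have hweight : ∀ e ∈ s, 0 ≤ β e / Γ := fun e he => div_nonneg (hβ e he) hΓ.le
  have hpt : ∀ t, w t * ∏ e ∈ s, ENNReal.ofReal (‖t - y e‖ ^ (-β e)) ≤
      ∑ e ∈ s, ENNReal.ofReal (β e / Γ) * (w t * ENNReal.ofReal (‖t - y e‖ ^ (-Γ))) := by
    intro t
    have hnn : ∀ e ∈ s, 0 ≤ ‖t - y e‖ ^ (-β e) := fun e _ =>
      Real.rpow_nonneg (norm_nonneg _) _
    rw [← ENNReal.ofReal_prod_of_nonneg hnn]
    calc w t * ENNReal.ofReal (∏ e ∈ s, ‖t - y e‖ ^ (-β e))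
        ≤ w t * ENNReal.ofReal (∑ e ∈ s, β e / Γ * ‖t - y e‖ ^ (-Γ)) := by
          gcongr
          exact Real.prod_rpow_neg_le_sum_mul_rpow_neg (fun e _ => norm_nonneg _) hβ hΓ
      _ = _ := by
          rw [ENNReal.ofReal_sum_of_nonneg fun e he =>
            mul_nonneg (hweight e he) (Real.rpow_nonneg (norm_nonneg _) _), mul_sum]
          refine sum_congr rfl fun e he => ?_
          rw [ENNReal.ofReal_mul (hweight e he)]
          ring
  calc ∫⁻ t, w t * ∏ e ∈ s, ENNReal.ofReal (‖t - y e‖ ^ (-β e)) ∂μ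
      ≤ ∫⁻ t, ∑ e ∈ s, ENNReal.ofReal (β e / Γ) *
          (w t * ENNReal.ofReal (‖t - y e‖ ^ (-Γ))) ∂μ := lintegral_mono hpt
    _ = ∑ e ∈ s, ENNReal.ofReal (β e / Γ) *
          ∫⁻ t, w t * ENNReal.ofReal (‖t - y e‖ ^ (-Γ)) ∂μ := by
        rw [lintegral_finsetSum _ fun e _ => by fun_prop]
        exact sum_congr rfl fun e _ => lintegral_const_mul _ (by fun_prop)
    _ ≤ ∑ e ∈ s, ENNReal.ofReal (β e / Γ) * K := by
        gcongr
        exact lintegral_mul_rpow_neg_norm_sub_le hw1 hΓ.le _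
    _ = K := by
        rw [← sum_mul, ← ENNReal.ofReal_sum_of_nonneg hweight, ← sum_div, div_self hΓ.ne',
          ENNReal.ofReal_one, one_mul]

end Kernel

section Chain

variable {ι : Type*} [DecidableEq ι] (τ : ι → ι)

-- The index `i` stands for the factor `‖x i - x (τ i)‖`; these are the factors living on `S`
-- that involve `x j`.
def incidentEdges (S : Finset ι) (j : ι) : Finset ι :=
  {i ∈ S | τ i ∈ S ∧ (i = j ∨ τ i = j)}

lemma exists_sum_incidentEdges_lt {α : ι → ℝ} {c : ℝ} (hα0 : ∀ i, 0 ≤ α i)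
    (hα : ∀ i, α i < c / 2) {S : Finset ι} (hS : S.Nonempty) :
    ∃ j ∈ S, ∑ i ∈ incidentEdges τ S j, α i < c := by
  obtain ⟨j, hj, hfiber⟩ :=
    exists_card_fiber_le_of_card_le_mul (f := τ) hS (n := 1) (mul_one _).ge
  refine ⟨j, hj, ?_⟩
  have hloop : ∑ i ∈ incidentEdges τ S j with i = j, α i ≤ α j := by
    refine (sum_le_sum_of_subset_of_nonneg (fun i hi => ?_) fun i _ _ => hα0 i).trans_eq
      (sum_singleton α j)
    simp [(mem_filter.mp hi).2]
  have hin : ∑ i ∈ incidentEdges τ S j with ¬i = j, α i ≤ c / 2 := by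
    calc ∑ i ∈ incidentEdges τ S j with ¬i = j, α i
        ≤ ∑ i ∈ S with τ i = j, α i := by
          refine sum_le_sum_of_subset_of_nonneg (fun i hi => ?_) fun i _ _ => hα0 i
          simp only [incidentEdges, mem_filter] at hi ⊢
          tauto
      _ ≤ #{i ∈ S | τ i = j} • (c / 2) := sum_le_card_nsmul _ _ _ fun i _ => (hα i).le
      _ ≤ 1 • (c / 2) := nsmul_le_nsmul_left ((hα0 j).trans (hα j).le) hfiber
      _ = c / 2 := one_nsmul _
  rw [← sum_filter_add_sum_filter_not _ (· = j)]
  linarith [hα j]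

variable {E : Type*} [NormedAddCommGroup E] (α : ι → ℝ) (w : E → ℝ≥0∞)

noncomputable def partialIntegrand (S : Finset ι) (x : ι → E) : ℝ≥0∞ :=
  (∏ i ∈ S, w (x i)) * ∏ i ∈ S with τ i ∈ S, ENNReal.ofReal (‖x i - x (τ i)‖ ^ (-α i))

lemma measurable_partialIntegrand [MeasurableSpace E] [BorelSpace E]
    [SecondCountableTopology E] (hw : Measurable w) (S : Finset ι) :
    Measurable (partialIntegrand τ α w S) :=
  (measurable_prod _ fun i _ => hw.comp (measurable_pi_apply i)).mul
    (measurable_prod _ fun i _ => by fun_prop)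

-- `update x j (x (τ j))` lists the other endpoints: `x (τ j)` for the factor indexed by `j`
-- itself, `x i` for a factor indexed by `i` with `τ i = j`.
variable {τ} in
lemma partialIntegrand_update {S : Finset ι} {j : ι} (hj : j ∈ S) (hτj : τ j ≠ j)
    (x : ι → E) (t : E) :
    partialIntegrand τ α w S (update x j t) =
      (w t * ∏ i ∈ incidentEdges τ S j,
        ENNReal.ofReal (‖t - update x j (x (τ j)) i‖ ^ (-α i))) *
      partialIntegrand τ α w (S.erase j) x := by
  have hvertex : ∏ i ∈ S, w (update x j t i) = w t * ∏ i ∈ S.erase j, w (x i) := by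
    rw [← mul_prod_erase S _ hj, update_self]
    congr 1
    exact prod_congr rfl fun i hi => by rw [update_of_ne (ne_of_mem_erase hi)]
  have hrest : ({i ∈ S | τ i ∈ S}).filter (fun i => ¬(i = j ∨ τ i = j)) =
      {i ∈ S.erase j | τ i ∈ S.erase j} := by
    ext i
    simp only [mem_filter, mem_erase]
    tauto
  have hsplit : ∏ i ∈ S with τ i ∈ S,
        ENNReal.ofReal (‖update x j t i - update x j t (τ i)‖ ^ (-α i)) =
      (∏ i ∈ incidentEdges τ S j, ENNReal.ofReal (‖t - update x j (x (τ j)) i‖ ^ (-α i))) *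
      ∏ i ∈ S.erase j with τ i ∈ S.erase j, ENNReal.ofReal (‖x i - x (τ i)‖ ^ (-α i)) := by
    rw [← prod_filter_mul_prod_filter_not _ (fun i => i = j ∨ τ i = j), hrest, filter_filter]
    congr 1
    · refine prod_congr rfl fun i hi => ?_
      rcases (mem_filter.mp hi).2.2 with rfl | hτi
      · rw [update_self, update_self, update_of_ne hτj]
      · have hij : i ≠ j := fun h => hτj (h ▸ hτi)
        rw [update_of_ne hij, update_of_ne hij, hτi, update_self, norm_sub_rev]
    · refine prod_congr rfl fun i hi => ?_
      simp only [mem_filter, mem_erase] at hi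
      rw [update_of_ne hi.1.1, update_of_ne hi.2.1]
  rw [partialIntegrand, partialIntegrand, hvertex, hsplit]
  ring

end Chain

section Integrability

variable {ι : Type*} [DecidableEq ι] {τ : ι → ι} {α : ι → ℝ}
  {E : Type*} [NormedAddCommGroup E] [MeasurableSpace E] [BorelSpace E] {μ : Measure E}
  {w : E → ℝ≥0∞}

lemma lintegral_partialIntegrand_update_le [μ.IsAddRightInvariant] (hw : Measurable w)
    (hw1 : w ≤ 1) (hα0 : ∀ i, 0 ≤ α i) {S : Finset ι} {j : ι} (hj : j ∈ S) (hτj : τ j ≠ j)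
    (x : ι → E) :
    ∫⁻ t, partialIntegrand τ α w S (update x j t) ∂μ ≤
      (∫⁻ t in ball (0 : E) 1, ENNReal.ofReal (‖t‖ ^ (-∑ i ∈ incidentEdges τ S j, α i)) ∂μ +
        ∫⁻ t, w t ∂μ) * partialIntegrand τ α w (S.erase j) x := by
  simp_rw [partialIntegrand_update α w hj hτj]
  rw [lintegral_mul_const _ (by fun_prop)]
  gcongr
  exact lintegral_mul_prod_rpow_neg_norm_sub_le hw hw1 (fun i _ => hα0 i) _

variable (μ) in
lemma exists_lmarginal_partialIntegrand_le [NormedSpace ℝ E] [FiniteDimensional ℝ E]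
    [μ.IsAddHaarMeasure] (hw : Measurable w) (hw1 : w ≤ 1)
    (hwi : ∫⁻ t, w t ∂μ < ⊤) (hτ : ∀ i, τ i ≠ i) (hα0 : ∀ i, 0 ≤ α i)
    (hα : ∀ i, α i < finrank ℝ E / 2) (S : Finset ι) :
    ∃ C < ⊤, ∀ x, (∫⋯∫⁻_S, partialIntegrand τ α w S ∂fun _ => μ) x ≤ C := by
  induction S using Finset.strongInduction with | H S ih =>
  rcases S.eq_empty_or_nonempty with rfl | hS
  · exact ⟨1, ENNReal.one_lt_top, fun x => by simp [partialIntegrand]⟩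
  obtain ⟨j, hj, hsum⟩ := exists_sum_incidentEdges_lt τ hα0 hα hS
  obtain ⟨C, hC, hle⟩ := ih _ (erase_ssubset hj)
  set K := ∫⁻ t in ball (0 : E) 1,
    ENNReal.ofReal (‖t‖ ^ (-∑ i ∈ incidentEdges τ S j, α i)) ∂μ + ∫⁻ t, w t ∂μ
  have hK : K < ⊤ := ENNReal.add_lt_top.2
    ⟨lintegral_ball_rpow_neg_norm_lt_top (sum_nonneg fun i _ => hα0 i) hsum, hwi⟩
  refine ⟨K * C, ENNReal.mul_lt_top hK hC, fun x => ?_⟩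
  calc (∫⋯∫⁻_S, partialIntegrand τ α w S ∂fun _ => μ) x
      = (∫⋯∫⁻_S.erase j, (fun x => ∫⁻ t, partialIntegrand τ α w S (update x j t) ∂μ)
          ∂fun _ => μ) x := by
        rw [lmarginal_erase' _ (measurable_partialIntegrand τ α w hw S) hj]
    _ ≤ (∫⋯∫⁻_S.erase j, (fun x => K * partialIntegrand τ α w (S.erase j) x)
          ∂fun _ => μ) x :=
        lmarginal_mono (fun x => lintegral_partialIntegrand_update_le hw hw1 hα0 hj (hτ j) x) x
    _ = K * (∫⋯∫⁻_S.erase j, partialIntegrand τ α w (S.erase j) ∂fun _ => μ) x :=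
        lintegral_const_mul' _ _ hK.ne
    _ ≤ K * C := by gcongr; exact hle x

end Integrability

theorem stmt7_general (d p : ℕ)
    (τ : Fin p → Fin p) (hτ : ∀ i, τ i ≠ i)
    (α : Fin p → ℝ) (hα0 : ∀ i, 0 ≤ α i) (hα : ∀ i, α i < (d : ℝ) / 2) :
    (∫⁻ x : Fin p → EuclideanSpace ℝ (Fin d),
      ENNReal.ofReal
        ((∏ i, jb (x i) ^ (-((d : ℝ) + 1))) * ∏ i, ‖x i - x (τ i)‖ ^ (-(α i)))) < ⊤ := by
  set w : EuclideanSpace ℝ (Fin d) → ℝ≥0∞ :=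
    fun y => ENNReal.ofReal (jb y ^ (-((d : ℝ) + 1)))
  have hw : Measurable w := by unfold w jb; fun_prop
  have hw1 : w ≤ 1 := fun y => ENNReal.ofReal_le_one.2 <|
    Real.rpow_le_one_of_one_le_of_nonpos (one_le_jb y) (by linarith [d.cast_nonneg (α := ℝ)])
  obtain ⟨C, hC, hle⟩ := exists_lmarginal_partialIntegrand_le volume hw hw1
    (lintegral_jb_rpow_neg_lt_top (by linarith)) hτ hα0 (by simpa using hα) univ
  have hintegrand : ∀ x : Fin p → EuclideanSpace ℝ (Fin d),
      ENNReal.ofReal ((∏ i, jb (x i) ^ (-((d : ℝ) + 1))) * ∏ i, ‖x i - x (τ i)‖ ^ (-(α i))) =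
        partialIntegrand τ α w univ x := fun x => by
    have hjb : ∀ i ∈ univ, 0 ≤ jb (x i) ^ (-((d : ℝ) + 1)) := fun i _ =>
      Real.rpow_nonneg (zero_le_one.trans (one_le_jb _)) _
    rw [ENNReal.ofReal_mul (prod_nonneg hjb), ENNReal.ofReal_prod_of_nonneg hjb,
      ENNReal.ofReal_prod_of_nonneg fun i _ => Real.rpow_nonneg (norm_nonneg _) _,
      partialIntegrand, filter_true_of_mem fun i _ => mem_univ _]
  simp_rw [hintegrand, volume_pi, lintegral_eq_lmarginal_univ 0]
  exact (hle 0).trans_lt hC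

/-- For `p ≥ 2`, a fixed-point-free map `τ` on `{1,…,p}` and exponents
`α₁, …, α_p ∈ [0, d/2)`, the Lebesgue integral over `(ℝ^d)^p` of
`∏ᵢ ⟨xᵢ⟩^{-(d+1)} · ∏ᵢ |xᵢ − x_{τ(i)}|^{-αᵢ}` is finite. -/
theorem stmt7 (d p : ℕ) (hd : 0 < d) (hp : 2 ≤ p)
    (τ : Fin p → Fin p) (hτ : ∀ i, τ i ≠ i)
    (α : Fin p → ℝ) (hα0 : ∀ i, 0 ≤ α i) (hα : ∀ i, α i < (d : ℝ) / 2) :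
    (∫⁻ x : Fin p → EuclideanSpace ℝ (Fin d),
      ENNReal.ofReal
        ((∏ i, jb (x i) ^ (-((d : ℝ) + 1))) * ∏ i, ‖x i - x (τ i)‖ ^ (-(α i)))) < ⊤ :=
  stmt7_general d p τ hτ α hα0 hα
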